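/- arXiv:2605.07231 — 7 statements merged into one kernel-verified Lean document; each statement's English description precedes it below -/
import Mathlib

section
/- Let l_1, l_2 be nonnegative integers and let c_l (−l_1 ≤ l ≤ l_2) be nonnegative reals with \sum_l c_l = 1 and c_0 > 1/2. Define the complex polynomial P(X) = \sum_{l=−l_1}^{l_2} c_l X^{l+l_1} of degree at most l_1+l_2. Then P has no zero on the unit circle |z| = 1, and the number of zeros of P in the open unit disk |z| < 1, counted with multiplicity, equals exactly l_1. (Consequently a one-dimensional translation-invariant stochastic matrix whose self-transition probability exceeds 1/2 has vanishing winding number around the origin.) -/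
/-!
On the unit circle the monomial `c 0 z ^ l₁` dominates the rest of `P`, which has norm at most
`1 - c 0 < c 0`. Hence `P(z) / z ^ l₁` stays in the open right half-plane, where `log` is
holomorphic, so `∮ P'/P = ∮ l₁ / z = 2πi l₁`. The argument principle for polynomials (via the
partial fraction expansion `P'/P = ∑ 1 / (z - r)` over the roots) then counts `l₁` roots inside.
-/

open Finset Polynomial Metric Complex

open scoped Real

theorem Complex.mem_slitPlane_of_norm_sub_lt {w : ℂ} {a : ℝ} (h : ‖w - a‖ < a) :
    w ∈ slitPlane := by
  refine mem_slitPlane_iff.2 (Or.inl ?_)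
  have hre := neg_le_of_abs_le (abs_re_le_norm (w - a))
  rw [sub_re, ofReal_re] at hre
  linarith

theorem Complex.ne_zero_of_div_mem_slitPlane {a b : ℂ} (h : a / b ∈ slitPlane) : a ≠ 0 := by
  rintro rfl
  rw [zero_div] at h
  exact zero_notMem_slitPlane h

namespace circleIntegral

variable {c : ℂ} {R : ℝ}

theorem integral_sub_inv_of_notMem_sphere (hR : 0 ≤ R) {w : ℂ} (hw : w ∉ sphere c R) :
    ∮ z in C(c, R), (z - w)⁻¹ = if dist w c < R then 2 * π * I else 0 := by
  split_ifs with hin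
  · exact integral_sub_inv_of_mem_ball hin
  · have hout : w ∉ closedBall c R := fun h => hw (le_antisymm h (not_lt.1 hin))
    have hdiff : DifferentiableOn ℂ (fun z => (z - w)⁻¹) (closedBall c R) :=
      (differentiableOn_id.sub_const w).inv fun z hz =>
        sub_ne_zero.2 (ne_of_mem_of_not_mem hz hout)
    exact (hdiff.mono closure_ball_subset_closedBall).diffContOnCl.circleIntegral_eq_zero hR

theorem integral_multiset_sum_sub_inv (hR : 0 ≤ R) (M : Multiset ℂ)
    (hM : ∀ w ∈ M, w ∉ sphere c R) :
    ∮ z in C(c, R), (M.map fun w => (z - w)⁻¹).sum =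
      2 * π * I * Multiset.card (M.filter fun w => dist w c < R) := by
  induction M using Multiset.induction with
  | empty => simp [circleIntegral]
  | cons a M ih =>
    have ha : a ∉ sphere c R := hM a (Multiset.mem_cons_self a M)
    have hM' : ∀ w ∈ M, w ∉ sphere c R := fun w hw => hM w (Multiset.mem_cons_of_mem hw)
    have hinv : ∀ w ∉ sphere c R, ContinuousOn (fun z => (z - w)⁻¹) (sphere c R) :=
      fun w hw => (continuous_sub_right w).continuousOn.inv₀ fun z hz =>
        sub_ne_zero.2 (ne_of_mem_of_not_mem hz hw)
    have hint : CircleIntegrable (fun z => (M.map fun w => (z - w)⁻¹).sum) c R :=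
      (continuousOn_multiset_sum M fun w hw => hinv w (hM' w hw)).circleIntegrable hR
    simp only [Multiset.map_cons, Multiset.sum_cons]
    rw [integral_add ((hinv a ha).circleIntegrable hR) hint, ih hM',
      integral_sub_inv_of_notMem_sphere hR ha, Multiset.filter_cons]
    split_ifs
    · rw [Multiset.card_add, Multiset.card_singleton]
      push_cast
      ring
    · rw [zero_add, zero_add]

theorem integral_logDeriv_eq_zero_of_mem_slitPlane (hR : 0 ≤ R) {f : ℂ → ℂ}
    (hf : ∀ z ∈ sphere c R, DifferentiableAt ℂ f z) (hslit : ∀ z ∈ sphere c R, f z ∈ slitPlane) :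
    ∮ z in C(c, R), logDeriv f z = 0 :=
  integral_eq_zero_of_hasDerivWithinAt hR fun z hz =>
    ((hf z hz).hasDerivAt.clog (hslit z hz)).hasDerivWithinAt

end circleIntegral

namespace Polynomial

open circleIntegral

theorem circleIntegral_eval_derivative_div_eval {p : ℂ[X]} {c : ℂ} {R : ℝ} (hR : 0 ≤ R)
    (hp : ∀ z ∈ sphere c R, eval z p ≠ 0) :
    ∮ z in C(c, R), eval z (derivative p) / eval z p =
      2 * π * I * Multiset.card (p.roots.filter fun w => dist w c < R) := by
  rw [integral_congr hR fun z hz =>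
    (IsAlgClosed.splits p).eval_derivative_div_eval_of_ne_zero (hp z hz)]
  simp only [one_div]
  exact integral_multiset_sum_sub_inv hR p.roots fun w hw hws =>
    hp w hws (isRoot_of_mem_roots hw)

theorem circleIntegral_eval_derivative_div_eval_of_div_pow_mem_slitPlane {p : ℂ[X]} {R : ℝ}
    (hR : 0 < R) {n : ℕ} (hslit : ∀ z ∈ sphere (0 : ℂ) R, eval z p / z ^ n ∈ slitPlane) :
    ∮ z in C(0, R), eval z (derivative p) / eval z p = 2 * π * I * n := by
  have hz0 : ∀ z ∈ sphere (0 : ℂ) R, z ≠ 0 := fun z hz => ne_zero_of_mem_sphere hR.ne' ⟨z, hz⟩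
  have hp : ∀ z ∈ sphere (0 : ℂ) R, eval z p ≠ 0 := fun z hz =>
    ne_zero_of_div_mem_slitPlane (hslit z hz)
  have hint : CircleIntegrable (fun z => eval z (derivative p) / eval z p) 0 R :=
    (p.derivative.continuous_aeval.continuousOn.div p.continuous_aeval.continuousOn
      hp).circleIntegrable hR.le
  have hint_inv : CircleIntegrable (fun z => (n : ℂ) * (z - 0)⁻¹) 0 R :=
    (continuousOn_const.mul ((continuous_sub_right 0).continuousOn.inv₀ fun z hz => by
      simpa using hz0 z hz)).circleIntegrable hR.le
  have hlogDeriv : Set.EqOn (fun z => eval z (derivative p) / eval z p - n * (z - 0)⁻¹)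
      (logDeriv fun z => eval z p / z ^ n) (sphere 0 R) := fun z hz => by
    dsimp only
    have h := logDeriv_div (f := fun z => eval z p) (g := (· ^ n)) z (hp z hz)
      (pow_ne_zero n (hz0 z hz)) p.differentiableAt (differentiableAt_pow n)
    rw [h, logDeriv_pow, logDeriv_apply, Polynomial.deriv, div_eq_mul_inv (n : ℂ), sub_zero]
  have hzero := integral_logDeriv_eq_zero_of_mem_slitPlane (f := fun z => eval z p / z ^ n) hR.le
    (fun z hz => p.differentiableAt.div (differentiableAt_pow n) (pow_ne_zero n (hz0 z hz))) hslit
  rw [← integral_congr hR.le hlogDeriv, integral_sub hint hint_inv, sub_eq_zero,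
    integral_const_mul, integral_sub_center_inv 0 hR.ne'] at hzero
  rw [hzero, mul_comm]

theorem card_roots_filter_norm_lt_of_div_pow_mem_slitPlane {p : ℂ[X]} {R : ℝ} (hR : 0 < R)
    {n : ℕ} (hslit : ∀ z ∈ sphere (0 : ℂ) R, eval z p / z ^ n ∈ slitPlane) :
    Multiset.card (p.roots.filter fun z => ‖z‖ < R) = n := by
  have hcount := circleIntegral_eval_derivative_div_eval hR.le fun z hz =>
    ne_zero_of_div_mem_slitPlane (hslit z hz)
  rw [circleIntegral_eval_derivative_div_eval_of_div_pow_mem_slitPlane hR hslit] at hcount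
  have h2πI : 2 * (π : ℂ) * I ≠ 0 := by simp [Real.pi_ne_zero, I_ne_zero]
  simpa [dist_zero_right] using (mul_left_cancel₀ h2πI hcount).symm

end Polynomial

/-- The symbol `z ^ l₁ ξ(z)` of the walk with transition probabilities `c`. -/
noncomputable def transitionPoly (l₁ l₂ : ℕ) (c : ℤ → ℝ) : ℂ[X] :=
  ∑ l ∈ Icc (-(l₁ : ℤ)) l₂, C (c l : ℂ) * X ^ (l + l₁).toNat

section transitionPoly

variable {l₁ l₂ : ℕ} {c : ℤ → ℝ}

theorem norm_eval_transitionPoly_sub_le (hnn : ∀ l ∈ Icc (-(l₁ : ℤ)) l₂, 0 ≤ c l)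
    (hsum : ∑ l ∈ Icc (-(l₁ : ℤ)) l₂, c l = 1) {z : ℂ} (hz : ‖z‖ = 1) :
    ‖eval z (transitionPoly l₁ l₂ c) - c 0 * z ^ l₁‖ ≤ 1 - c 0 := by
  have h0 : (0 : ℤ) ∈ Icc (-(l₁ : ℤ)) l₂ := by simp
  have hrest : ∑ l ∈ (Icc (-(l₁ : ℤ)) l₂).erase 0, c l = 1 - c 0 := by
    rw [← hsum, ← add_sum_erase _ _ h0, add_sub_cancel_left]
  have heval : eval z (transitionPoly l₁ l₂ c) - c 0 * z ^ l₁ =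
      ∑ l ∈ (Icc (-(l₁ : ℤ)) l₂).erase 0, (c l : ℂ) * z ^ (l + l₁).toNat := by
    rw [transitionPoly, eval_finsetSum, ← add_sum_erase _ _ h0]
    simp
  calc ‖eval z (transitionPoly l₁ l₂ c) - c 0 * z ^ l₁‖
      ≤ ∑ l ∈ (Icc (-(l₁ : ℤ)) l₂).erase 0, ‖(c l : ℂ) * z ^ (l + l₁).toNat‖ :=
        heval ▸ norm_sum_le _ _
    _ = 1 - c 0 := by
        rw [← hrest]
        refine sum_congr rfl fun l hl => ?_
        rw [norm_mul, norm_pow, hz, one_pow, mul_one, norm_real, Real.norm_of_nonneg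
          (hnn l (mem_of_mem_erase hl))]

theorem transitionPoly_div_pow_mem_slitPlane (hnn : ∀ l ∈ Icc (-(l₁ : ℤ)) l₂, 0 ≤ c l)
    (hsum : ∑ l ∈ Icc (-(l₁ : ℤ)) l₂, c l = 1) (hlazy : 1 / 2 < c 0) :
    ∀ z ∈ sphere (0 : ℂ) 1, eval z (transitionPoly l₁ l₂ c) / z ^ l₁ ∈ slitPlane := by
  intro z hz
  rw [mem_sphere_zero_iff_norm] at hz
  have hzl : z ^ l₁ ≠ 0 := pow_ne_zero _ (norm_ne_zero_iff.1 (hz ▸ one_ne_zero))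
  refine mem_slitPlane_of_norm_sub_lt (a := c 0) ?_
  calc ‖eval z (transitionPoly l₁ l₂ c) / z ^ l₁ - c 0‖
      = ‖eval z (transitionPoly l₁ l₂ c) - c 0 * z ^ l₁‖ := by
        rw [div_sub' hzl, norm_div, norm_pow, hz, one_pow, div_one, mul_comm]
    _ ≤ 1 - c 0 := norm_eval_transitionPoly_sub_le hnn hsum hz
    _ < c 0 := by linarith

end transitionPoly

/-- For a finite-range one-dimensional translation-invariant stochastic process with
transition probabilities `c l` (`-l₁ ≤ l ≤ l₂`), `∑ c l = 1` and self-transition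
probability `c 0 > 1/2`, the polynomial `P(X) = ∑ c l * X^(l + l₁)` has no zero on the
unit circle and exactly `l₁` zeros (with multiplicity) in the open unit disk. -/
theorem zeros_in_disk_of_lazy_walk (l₁ l₂ : ℕ) (c : ℤ → ℝ)
    (hnn : ∀ l ∈ Finset.Icc (-(l₁ : ℤ)) (l₂ : ℤ), 0 ≤ c l)
    (hsum : ∑ l ∈ Finset.Icc (-(l₁ : ℤ)) (l₂ : ℤ), c l = 1)
    (hlazy : 1 / 2 < c 0) :
    (∀ z : ℂ, ‖z‖ = 1 →
      Polynomial.eval z (∑ l ∈ Finset.Icc (-(l₁ : ℤ)) (l₂ : ℤ),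
        Polynomial.C ((c l : ℂ)) * Polynomial.X ^ (l + l₁).toNat) ≠ 0) ∧
    (Multiset.card ((∑ l ∈ Finset.Icc (-(l₁ : ℤ)) (l₂ : ℤ),
        Polynomial.C ((c l : ℂ)) * Polynomial.X ^ (l + l₁).toNat).roots.filter
          (fun z => ‖z‖ < 1)) = l₁) := by
  have hslit := transitionPoly_div_pow_mem_slitPlane hnn hsum hlazy
  exact ⟨fun z hz => ne_zero_of_div_mem_slitPlane (hslit z (mem_sphere_zero_iff_norm.2 hz)),
    card_roots_filter_norm_lt_of_div_pow_mem_slitPlane one_pos hslit⟩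
end

section
/- (Parity formula) Let p be a nonzero polynomial with real coefficients such that p has no complex zero on the unit circle |z| = 1. Let N_0 denote the number of complex zeros of p in the open unit disk |z| < 1, counted with multiplicity. Then (−1)^{N_0} = sgn(p(1) · p(−1)); equivalently, p(1)·p(−1) > 0 if N_0 is even and p(1)·p(−1) < 0 if N_0 is odd. -/
/-!
Over `ℂ`, `p = c ∏ (X - r)` gives `p(1) p(-1) = c² ∏ (r² - 1)`. The roots of a real polynomial
come as real roots and pairs `r, r̄`. A pair contributes `|r² - 1|² > 0` and changes the count
of roots in the disk by `0` or `2`; a real root `r` contributes `r² - 1`, which is negative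
exactly when `|r| < 1`.
-/

open Polynomial ComplexConjugate

namespace Multiset

variable {α : Type*} [InvolutiveStar α]

@[elab_as_elim]
theorem induction_on_star_invariant {P : Multiset α → Prop} (zero : P 0)
    (self_adjoint : ∀ a s, star a = a → P s → P (a ::ₘ s))
    (pair : ∀ a s, P s → P (a ::ₘ star a ::ₘ s)) (s : Multiset α) (hs : s.map star = s) :
    P s := by
  classical
  induction s using Multiset.strongInductionOn with
  | ih s ih =>
  rcases s.empty_or_exists_mem with rfl | ⟨a, ha⟩
  · exact zero
  obtain ⟨s, rfl⟩ : ∃ s', s = a ::ₘ s' := ⟨_, (cons_erase ha).symm⟩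
  by_cases hsa : star a = a
  · rw [map_cons, hsa, cons_inj_right] at hs
    exact self_adjoint a s hsa (ih s (lt_cons_self s a) hs)
  · have hmem : star a ∈ s := by
      have : star a ∈ (a ::ₘ s).map star := mem_map_of_mem _ (mem_cons_self a s)
      rw [hs] at this
      exact (mem_cons.1 this).resolve_left hsa
    obtain ⟨s, rfl⟩ : ∃ s', s = star a ::ₘ s' := ⟨_, (cons_erase hmem).symm⟩
    rw [map_cons, map_cons, star_star, cons_swap, cons_inj_right, cons_inj_right] at hs
    exact pair a s (ih s ((lt_cons_self s _).trans (lt_cons_self _ a)) hs)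

end Multiset

theorem sq_sub_one_ne_zero_of_norm_ne_one {K : Type*} [NormedDivisionRing K] {z : K}
    (hz : ‖z‖ ≠ 1) : z ^ 2 - 1 ≠ 0 := by
  intro h
  have : ‖z‖ ^ 2 = 1 := by rw [← norm_pow, sub_eq_zero.1 h, norm_one]
  exact hz ((pow_eq_one_iff_of_nonneg (norm_nonneg z) two_ne_zero).1 this)

namespace Complex

theorem exists_prod_map_sq_sub_one_eq {s : Multiset ℂ} (hs : s.map conj = s)
    (hs1 : ∀ z ∈ s, ‖z‖ ≠ 1) :
    ∃ t : ℝ, 0 < t ∧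
      (s.map fun z : ℂ => z ^ 2 - 1).prod = (((-1) ^ s.countP (‖·‖ < 1) * t : ℝ) : ℂ) := by
  revert hs1
  refine Multiset.induction_on_star_invariant ?_ ?_ ?_ s hs
  · exact fun _ => ⟨1, one_pos, by simp⟩
  · rintro a s ha ih hs1
    obtain ⟨x, rfl⟩ := conj_eq_iff_real.1 ha
    obtain ⟨t, ht, hprod⟩ := ih fun z hz => hs1 z (Multiset.mem_cons_of_mem hz)
    have hx : x ^ 2 - 1 ≠ 0 := by
      exact_mod_cast sq_sub_one_ne_zero_of_norm_ne_one (hs1 x (Multiset.mem_cons_self _ _))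
    refine ⟨|x ^ 2 - 1| * t, by positivity, ?_⟩
    rw [Multiset.map_cons, Multiset.prod_cons, hprod, Multiset.countP_cons, norm_real,
      Real.norm_eq_abs]
    split_ifs with hx1
    · rw [abs_of_neg (sub_neg.2 (sq_lt_one_iff_abs_lt_one x |>.2 hx1))]
      push_cast; ring
    · have : 1 ≤ x ^ 2 := one_le_sq_iff_one_le_abs x |>.2 (not_lt.1 hx1)
      rw [abs_of_pos (lt_of_le_of_ne (sub_nonneg.2 this) hx.symm)]
      push_cast; ring
  · rintro a s ih hs1
    obtain ⟨t, ht, hprod⟩ := ih fun z hz => hs1 z (by simp [hz])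
    have ha := sq_sub_one_ne_zero_of_norm_ne_one (hs1 a (Multiset.mem_cons_self _ _))
    refine ⟨normSq (a ^ 2 - 1) * t, mul_pos (normSq_pos.2 ha) ht, ?_⟩
    have hpair : (a ^ 2 - 1) * (star a ^ 2 - 1) = normSq (a ^ 2 - 1) := by
      rw [← mul_conj]; simp
    rw [Multiset.map_cons, Multiset.map_cons, Multiset.prod_cons, Multiset.prod_cons, ← mul_assoc,
      hpair, hprod, Multiset.countP_cons, Multiset.countP_cons]
    simp only [star_def, norm_conj]
    push_cast
    split_ifs <;> ring

end Complex

theorem Polynomial.Splits.eval_one_mul_eval_neg_one {R : Type*} [CommRing R] [IsDomain R]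
    {f : R[X]} (hf : f.Splits) :
    f.eval 1 * f.eval (-1) = f.leadingCoeff ^ 2 * (f.roots.map fun r => r ^ 2 - 1).prod := by
  rw [hf.eval_eq_prod_roots, hf.eval_eq_prod_roots, mul_mul_mul_comm, ← sq,
    ← Multiset.prod_map_mul]
  congr 2
  exact Multiset.map_congr rfl fun r _ => by ring

theorem Polynomial.map_conj_roots_map_ofReal (p : ℝ[X]) :
    (p.map (algebraMap ℝ ℂ)).roots.map conj = (p.map (algebraMap ℝ ℂ)).roots := by
  rw [← (IsAlgClosed.splits _).roots_map, map_map]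
  congr 2
  exact RingHom.ext Complex.conj_ofReal

theorem Real.sign_neg_one_pow_mul {x : ℝ} (hx : 0 < x) (n : ℕ) :
    Real.sign ((-1) ^ n * x) = (-1) ^ n := by
  rcases n.even_or_odd with hn | hn
  · rw [hn.neg_one_pow, one_mul, Real.sign_of_pos hx]
  · rw [hn.neg_one_pow, Real.sign_of_neg (by linarith)]

/-- Parity formula: for a nonzero real polynomial with no complex zero on the unit circle,
the parity of the number `N₀` of its complex zeros in the open unit disk (with multiplicity)
is given by `(-1)^N₀ = sgn (p(1) * p(-1))`. -/
theorem parity_formula (p : Polynomial ℝ) (hp : p ≠ 0)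
    (hcirc : ∀ z : ℂ, ‖z‖ = 1 → (p.map (algebraMap ℝ ℂ)).eval z ≠ 0) :
    ((-1 : ℝ)) ^ (Multiset.card ((p.map (algebraMap ℝ ℂ)).roots.filter
        (fun z => ‖z‖ < 1)))
      = Real.sign (p.eval 1 * p.eval (-1)) := by
  set q := p.map (algebraMap ℝ ℂ)
  have hq : q ≠ 0 := map_ne_zero hp
  obtain ⟨t, ht, hprod⟩ := Complex.exists_prod_map_sq_sub_one_eq (map_conj_roots_map_ofReal p)
    fun z hz h1 => hcirc z h1 ((mem_roots hq).1 hz)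
  have heval_prod := (IsAlgClosed.splits q).eval_one_mul_eval_neg_one
  rw [hprod, leadingCoeff_map_of_injective (algebraMap ℝ ℂ).injective,
    Complex.coe_algebraMap] at heval_prod
  have heval_ofReal (x : ℝ) : q.eval (x : ℂ) = p.eval x := eval_map_apply (f := algebraMap ℝ ℂ) x
  have key : p.eval 1 * p.eval (-1) =
      (-1) ^ q.roots.countP (‖·‖ < 1) * (p.leadingCoeff ^ 2 * t) := by
    apply Complex.ofReal_injective
    have h1 := heval_ofReal 1
    have h2 := heval_ofReal (-1)
    push_cast at h1 h2 heval_prod ⊢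
    rw [← h1, ← h2, heval_prod]
    ring
  have hlc := leadingCoeff_ne_zero.2 hp
  rw [key, Real.sign_neg_one_pow_mul (by positivity), Multiset.countP_eq_card_filter]
end

section
/- (Nontrivial winding of the asymmetric random walk, leftward case) Let p_R, p_L, p_0 be nonnegative reals with p_R + p_L + p_0 = 1, p_L > p_R, and p_L + p_R > 1/2. Then every complex root z of the quadratic polynomial q(X) = p_L X² + p_0 X + p_R satisfies |z| < 1. (Since q(z) = z·ξ(z) where ξ is the Bloch symbol, this means the winding number of the walk around the origin equals +1 = sgn(p_L − p_R).) -/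
/-!
This is the Schur–Cohn (Jury) test for the quadratic `a X² + b X + c` with `|c| < a` and
`|b| < a + c`, applied to `p_L X² + p_0 X + p_R`. A non-real root `z` has the root `z̄` as well,
and Vieta gives `a |z|² = c`, so `|z|² = c / a < 1`. A real root `x` with `x ≥ 1` is impossible
because `b > -(a + c)` forces `a x² + b x + c > (x - 1)(a x - c) ≥ 0`; symmetrically for `x ≤ -1`.
-/

open Polynomial

theorem abs_lt_one_of_quadratic_root {a b c x : ℝ} (hca : |c| < a) (hba : |b| < a + c)
    (hx : a * x ^ 2 + b * x + c = 0) : |x| < 1 := by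
  obtain ⟨hc₁, hc₂⟩ := abs_lt.mp hca
  obtain ⟨hb₁, hb₂⟩ := abs_lt.mp hba
  refine abs_lt.mpr ⟨?_, ?_⟩ <;> by_contra! hx₁
  · have : 0 ≤ (x + 1) * (a * x + c) :=
      mul_nonneg_of_nonpos_of_nonpos (by linarith) (by nlinarith)
    nlinarith
  · have : 0 ≤ (x - 1) * (a * x - c) := mul_nonneg (by linarith) (by nlinarith)
    nlinarith

theorem mul_normSq_eq_of_quadratic_root {a b c : ℝ} {z : ℂ} (hz_im : z.im ≠ 0)
    (hz : (a : ℂ) * z ^ 2 + b * z + c = 0) : a * Complex.normSq z = c := by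
  set w := starRingEnd ℂ z
  have hw : (a : ℂ) * w ^ 2 + b * w + c = 0 := by
    simpa using congrArg (starRingEnd ℂ) hz
  have hzw : z - w ≠ 0 :=
    sub_ne_zero.mpr fun h => hz_im (Complex.conj_eq_iff_im.mp h.symm)
  have hsum : (a : ℂ) * (z + w) + b = 0 :=
    (mul_eq_zero.mp (by linear_combination hz - hw : (z - w) * ((a : ℂ) * (z + w) + b) = 0)
      ).resolve_left hzw
  have hprod : ((a * Complex.normSq z : ℝ) : ℂ) = c := by
    rw [Complex.ofReal_mul, ← Complex.mul_conj]
    linear_combination z * hsum - hz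
  exact_mod_cast hprod

theorem norm_lt_one_of_quadratic_root {a b c : ℝ} {z : ℂ} (hca : |c| < a) (hba : |b| < a + c)
    (hz : (a : ℂ) * z ^ 2 + b * z + c = 0) : ‖z‖ < 1 := by
  by_cases hz_im : z.im = 0
  · have hz_re : z = (z.re : ℂ) := Complex.ext rfl (by simpa using hz_im)
    rw [hz_re] at hz ⊢
    rw [Complex.norm_real, Real.norm_eq_abs]
    exact abs_lt_one_of_quadratic_root hca hba (by exact_mod_cast hz)
  · have ha : 0 < a := (abs_nonneg c).trans_lt hca
    have hnormSq : Complex.normSq z < 1 := by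
      have := mul_normSq_eq_of_quadratic_root hz_im hz
      nlinarith [le_abs_self c]
    rwa [← Complex.sq_norm, sq_lt_one_iff₀ (norm_nonneg z)] at hnormSq

theorem asymmetric_walk_winding_left_general (pR pL p0 : ℝ)
    (hsum : pR + pL + p0 = 1) (hLR : pR < pL) (hhalf : 1 / 2 < pL + pR)
    (z : ℂ)
    (hz : Polynomial.eval z (Polynomial.C (pL : ℂ) * Polynomial.X ^ 2
      + Polynomial.C (p0 : ℂ) * Polynomial.X + Polynomial.C (pR : ℂ)) = 0) :
    ‖z‖ < 1 := by
  simp only [eval_add, eval_mul, eval_pow, eval_C, eval_X] at hz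
  exact norm_lt_one_of_quadratic_root (abs_lt.mpr ⟨by linarith, hLR⟩)
    (abs_lt.mpr ⟨by linarith, by linarith⟩) hz

/-- Leftward asymmetric random walk: if `p_L > p_R` and `p_L + p_R > 1/2`, every complex
root of `q(X) = p_L X² + p_0 X + p_R` lies strictly inside the unit disk, so the winding
number of the walk around the origin equals `+1`. -/
theorem asymmetric_walk_winding_left (pR pL p0 : ℝ)
    (hR : 0 ≤ pR) (hL : 0 ≤ pL) (h0 : 0 ≤ p0)
    (hsum : pR + pL + p0 = 1) (hLR : pR < pL) (hhalf : 1 / 2 < pL + pR)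
    (z : ℂ)
    (hz : Polynomial.eval z (Polynomial.C (pL : ℂ) * Polynomial.X ^ 2
      + Polynomial.C (p0 : ℂ) * Polynomial.X + Polynomial.C (pR : ℂ)) = 0) :
    ‖z‖ < 1 :=
  asymmetric_walk_winding_left_general pR pL p0 hsum hLR hhalf z hz
end

section
/- (Nontrivial winding of the asymmetric random walk, rightward case) Let p_R, p_L, p_0 be nonnegative reals with p_R + p_L + p_0 = 1, p_R > p_L, and p_L + p_R > 1/2. Then every complex root z of the polynomial q(X) = p_L X² + p_0 X + p_R satisfies |z| > 1. (Hence the winding number of the walk around the origin equals −1 = sgn(p_L − p_R).) -/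
open Polynomial

/-!
If `z = x + iy` is a root of the real quadratic `a z² + b z + c`, the imaginary part of the
equation reads `y (2 a x + b) = 0`. A nonreal root therefore satisfies `2 a x = -b`, and the real
part collapses to `a ‖z‖² = c`, which forces `‖z‖ > 1` once `0 ≤ a < c`. A real root `x` with
`t = |x| ≤ 1` is excluded by `a x² + b x + c ≥ (1 - t)² c + t (1 - t) (c - a) + t (a + c - |b|) > 0`.
For the walk, `(a, b, c) = (p_L, p_0, p_R)` and `|p_0| < p_L + p_R` is `p_L + p_R > 1/2`.
-/

theorem re_im_eq_zero_of_quadratic_eq_zero {a b c : ℝ} {z : ℂ}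
    (hz : (a : ℂ) * z ^ 2 + b * z + c = 0) :
    a * (z.re ^ 2 - z.im ^ 2) + b * z.re + c = 0 ∧ z.im * (2 * a * z.re + b) = 0 := by
  constructor
  · simpa [sq] using congrArg Complex.re hz
  · have := congrArg Complex.im hz
    simp only [sq, Complex.add_im, Complex.mul_im, Complex.mul_re, Complex.ofReal_re,
      Complex.ofReal_im, Complex.zero_im] at this
    linarith

theorem mul_normSq_eq_of_quadratic_eq_zero {a b c : ℝ} {z : ℂ}
    (hz : (a : ℂ) * z ^ 2 + b * z + c = 0) (him : z.im ≠ 0) :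
    a * Complex.normSq z = c := by
  obtain ⟨hre, him'⟩ := re_im_eq_zero_of_quadratic_eq_zero hz
  have hlin : 2 * a * z.re + b = 0 := (mul_eq_zero.mp him').resolve_left him
  rw [Complex.normSq_apply]
  linear_combination -hre + z.re * hlin

theorem quadratic_pos_of_abs_le_one {a b c x : ℝ} (hac : a < c) (hb : |b| < a + c)
    (hx : |x| ≤ 1) : 0 < a * x ^ 2 + b * x + c := by
  have hc : 0 < c := by linarith [abs_nonneg b]
  have ht : 0 ≤ |x| := abs_nonneg x
  have hbx : -(|b| * |x|) ≤ b * x := by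
    rw [← abs_mul]
    exact neg_abs_le (b * x)
  have hsq : x ^ 2 = |x| ^ 2 := (sq_abs x).symm
  have hpos : 0 < (1 - |x|) ^ 2 * c + |x| * (a + c - |b|) := by
    rcases ht.eq_or_lt with h | h
    · rw [← h]; simpa using hc
    · nlinarith [sq_nonneg (1 - |x|)]
  nlinarith [mul_nonneg (mul_nonneg ht (sub_nonneg.mpr hx)) (sub_nonneg.mpr hac.le)]

theorem one_lt_norm_of_quadratic_eq_zero {a b c : ℝ} (ha : 0 ≤ a) (hac : a < c)
    (hb : |b| < a + c) {z : ℂ} (hz : (a : ℂ) * z ^ 2 + b * z + c = 0) : 1 < ‖z‖ := by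
  by_contra! hle
  by_cases him : z.im = 0
  · have hre := (re_im_eq_zero_of_quadratic_eq_zero hz).1
    rw [him] at hre
    have hx : |z.re| ≤ 1 := (Complex.abs_re_le_norm z).trans hle
    linarith [quadratic_pos_of_abs_le_one hac hb hx]
  · have hsq : Complex.normSq z ≤ 1 := by
      rw [Complex.normSq_eq_norm_sq]
      nlinarith [norm_nonneg z]
    nlinarith [mul_normSq_eq_of_quadratic_eq_zero hz him]

theorem asymmetric_walk_winding_right_general (pR pL p0 : ℝ)
    (hL : 0 ≤ pL)
    (hsum : pR + pL + p0 = 1) (hLR : pL < pR) (hhalf : 1 / 2 < pL + pR)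
    (z : ℂ)
    (hz : Polynomial.eval z (Polynomial.C (pL : ℂ) * Polynomial.X ^ 2
      + Polynomial.C (p0 : ℂ) * Polynomial.X + Polynomial.C (pR : ℂ)) = 0) :
    1 < ‖z‖ := by
  simp only [eval_add, eval_mul, eval_C, eval_pow, eval_X] at hz
  have hp0 : |p0| < pL + pR := abs_lt.mpr ⟨by linarith, by linarith⟩
  exact one_lt_norm_of_quadratic_eq_zero hL hLR hp0 hz

/-- Rightward asymmetric random walk: if `p_R > p_L` and `p_L + p_R > 1/2`, every complex
root of `q(X) = p_L X² + p_0 X + p_R` lies strictly outside the unit disk, so the winding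
number of the walk around the origin equals `-1`. -/
theorem asymmetric_walk_winding_right (pR pL p0 : ℝ)
    (hR : 0 ≤ pR) (hL : 0 ≤ pL) (h0 : 0 ≤ p0)
    (hsum : pR + pL + p0 = 1) (hLR : pL < pR) (hhalf : 1 / 2 < pL + pR)
    (z : ℂ)
    (hz : Polynomial.eval z (Polynomial.C (pL : ℂ) * Polynomial.X ^ 2
      + Polynomial.C (p0 : ℂ) * Polynomial.X + Polynomial.C (pR : ℂ)) = 0) :
    1 < ‖z‖ :=
  asymmetric_walk_winding_right_general pR pL p0 hL hsum hLR hhalf z hz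
end

section
/- (Trivial phase of the asymmetric random walk) Let p_R, p_L, p_0 be nonnegative reals with p_R + p_L + p_0 = 1, p_R > 0, p_L > 0, and p_L + p_R < 1/2. Then the quadratic q(X) = p_L X² + p_0 X + p_R has no complex root on the unit circle |z| = 1, and exactly one complex root (with multiplicity) in the open unit disk |z| < 1. (Hence the winding number of the walk around the origin vanishes.) -/
open Polynomial

/-!
The quadratic `a X² + b X + c = pL X² + p0 X + pR` is diagonally dominant, `‖a‖ + ‖c‖ < ‖b‖`,
since `pL + pR < 1/2 < p0`.
Writing `a X² + b X + c = a (X - r) (X - s)`, Vieta and the triangle inequality give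
`‖a‖ (1 - ‖r‖) (1 - ‖s‖) ≤ ‖a‖ + ‖c‖ - ‖b‖ < 0`, so exactly one root lies strictly inside the
unit circle, the other strictly outside.
-/

theorem quadratic_eq_C_mul_X_sub_C_mul_X_sub_C {R : Type*} [CommRing R] {a b c r s : R}
    (hsum : a * (r + s) = -b) (hprod : a * (r * s) = c) :
    C a * X ^ 2 + C b * X + C c = C a * ((X - C r) * (X - C s)) := by
  rw [← hprod, ← neg_neg b, ← hsum]
  simp only [map_neg, map_mul, map_add]
  ring

theorem one_sub_norm_mul_one_sub_norm_neg {𝕜 : Type*} [NormedField 𝕜] {a b c r s : 𝕜}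
    (hsum : a * (r + s) = -b) (hprod : a * (r * s) = c) (hdom : ‖a‖ + ‖c‖ < ‖b‖) :
    (1 - ‖r‖) * (1 - ‖s‖) < 0 := by
  have hb : ‖b‖ ≤ ‖a‖ * (‖r‖ + ‖s‖) := by
    rw [← norm_neg, ← hsum, norm_mul]
    gcongr
    exact norm_add_le r s
  have hc : ‖c‖ = ‖a‖ * (‖r‖ * ‖s‖) := by rw [← hprod, norm_mul, norm_mul]
  refine neg_of_mul_neg_right (a := ‖a‖) ?_ (norm_nonneg a)
  nlinarith

theorem card_filter_norm_lt_one_pair_eq_one {𝕜 : Type*} [NormedField 𝕜] {r s : 𝕜}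
    (h : (1 - ‖r‖) * (1 - ‖s‖) < 0) :
    Multiset.card (({r, s} : Multiset 𝕜).filter (fun z => ‖z‖ < 1)) = 1 := by
  rcases mul_neg_iff.mp h with ⟨hr, hs⟩ | ⟨hr, hs⟩
  · simp [show ‖r‖ < 1 by linarith, show 1 ≤ ‖s‖ by linarith]
  · simp [Multiset.filter_singleton, show 1 ≤ ‖r‖ by linarith, show ‖s‖ < 1 by linarith]

theorem quadratic_roots_of_norm_add_norm_lt {a b c : ℂ} (ha : a ≠ 0)
    (hdom : ‖a‖ + ‖c‖ < ‖b‖) :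
    (∀ z : ℂ, ‖z‖ = 1 → eval z (C a * X ^ 2 + C b * X + C c) ≠ 0) ∧
    Multiset.card ((C a * X ^ 2 + C b * X + C c).roots.filter (fun z => ‖z‖ < 1)) = 1 := by
  obtain ⟨r, hr⟩ := Complex.exists_root (f := C a * X ^ 2 + C b * X + C c)
    (by rw [degree_quadratic ha]; norm_num)
  set s := -b / a - r
  have hsum : a * (r + s) = -b := by simp only [s]; field_simp; ring
  have hprod : a * (r * s) = c := by
    simp only [IsRoot, eval_add, eval_mul, eval_C, eval_pow, eval_X] at hr
    simp only [s]; field_simp; linear_combination -hr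
  have hfactor := quadratic_eq_C_mul_X_sub_C_mul_X_sub_C hsum hprod
  have hneg := one_sub_norm_mul_one_sub_norm_neg hsum hprod hdom
  constructor
  · intro z hz hzero
    rw [hfactor] at hzero
    simp only [eval_mul, eval_C, eval_sub, eval_X, mul_eq_zero, ha, sub_eq_zero, false_or]
      at hzero
    rcases hzero with rfl | rfl <;> simp [hz] at hneg
  · rw [hfactor, roots_C_mul _ ha,
      roots_mul (mul_ne_zero (X_sub_C_ne_zero r) (X_sub_C_ne_zero s)),
      roots_X_sub_C, roots_X_sub_C]
    exact card_filter_norm_lt_one_pair_eq_one hneg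

theorem asymmetric_walk_trivial_phase_general (pR pL p0 : ℝ)
    (hR : 0 < pR) (hL : 0 < pL)
    (hsum : pR + pL + p0 = 1) (hhalf : pL + pR < 1 / 2) :
    (∀ z : ℂ, ‖z‖ = 1 →
      Polynomial.eval z (Polynomial.C (pL : ℂ) * Polynomial.X ^ 2
        + Polynomial.C (p0 : ℂ) * Polynomial.X + Polynomial.C (pR : ℂ)) ≠ 0) ∧
    Multiset.card ((Polynomial.C (pL : ℂ) * Polynomial.X ^ 2
        + Polynomial.C (p0 : ℂ) * Polynomial.X + Polynomial.C (pR : ℂ)).roots.filter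
          (fun z => ‖z‖ < 1)) = 1 := by
  refine quadratic_roots_of_norm_add_norm_lt (by exact_mod_cast hL.ne') ?_
  simp only [Complex.norm_real, Real.norm_eq_abs, abs_of_pos hR, abs_of_pos hL,
    abs_of_pos (show 0 < p0 by linarith)]
  linarith

/-- Trivial phase of the asymmetric random walk: if `p_R, p_L > 0` and `p_L + p_R < 1/2`,
then `q(X) = p_L X² + p_0 X + p_R` has no root on the unit circle and exactly one root
(with multiplicity) in the open unit disk, so the winding number around the origin
vanishes. -/
theorem asymmetric_walk_trivial_phase (pR pL p0 : ℝ)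
    (hR : 0 < pR) (hL : 0 < pL) (h0 : 0 ≤ p0)
    (hsum : pR + pL + p0 = 1) (hhalf : pL + pR < 1 / 2) :
    (∀ z : ℂ, ‖z‖ = 1 →
      Polynomial.eval z (Polynomial.C (pL : ℂ) * Polynomial.X ^ 2
        + Polynomial.C (p0 : ℂ) * Polynomial.X + Polynomial.C (pR : ℂ)) ≠ 0) ∧
    Multiset.card ((Polynomial.C (pL : ℂ) * Polynomial.X ^ 2
        + Polynomial.C (p0 : ℂ) * Polynomial.X + Polynomial.C (pR : ℂ)).roots.filter
          (fun z => ‖z‖ < 1)) = 1 :=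
  asymmetric_walk_trivial_phase_general pR pL p0 hR hL hsum hhalf
end

section
/- (Homotopy invariance of the zero count in the disk) Let n be a positive integer and let c : ℝ → ℂ^{n+1} be continuous, and for each s define the polynomial p_s(X) = \sum_{i=0}^{n} c_i(s) X^i. Assume that for every s ∈ [0,1] the leading coefficient c_n(s) is nonzero and that p_s has no zero on the unit circle |z| = 1. Then the number of zeros of p_0 in the open unit disk |z| < 1, counted with multiplicity, equals the number of zeros of p_1 in the open unit disk, counted with multiplicity. -/
/-
Along a sequence of coefficient vectors `c k → c₀` with `c₀` of exact degree `n`, the roots of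
`c k` stay in a fixed ball (Cauchy's bound), so by compactness some subsequence of root vectors
`v k ∈ ℂⁿ` converges to some `w`; since `c k = c k (last) * ∏ (X - v k i)` is a closed condition,
`w` is a root vector of `c₀`. When `c₀` has no root on the frontier of `U`, each `v k i` is
eventually on the same side of that frontier as `w i`, so the number of roots in `U` is locally
constant in the coefficients. Along the continuous path `s ↦ c s` it is then a locally constant
function on the connected interval `[0, 1]`.
-/

open Polynomial Filter Topology Metric

lemma Filter.Tendsto.eventually_mem_iff_of_notMem_frontier {X ι : Type*} [TopologicalSpace X]
    {l : Filter ι} {f : ι → X} {x : X} {U : Set X} (hf : Tendsto f l (𝓝 x))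
    (hx : x ∉ frontier U) : ∀ᶠ k in l, f k ∈ U ↔ x ∈ U := by
  by_cases hxU : x ∈ U
  · have hint := (mem_interior_iff_notMem_frontier hxU).2 hx
    filter_upwards [hf.eventually (mem_interior_iff_mem_nhds.1 hint)] with k hk
    exact iff_of_true hk hxU
  · have hint := (mem_interior_iff_notMem_frontier (s := Uᶜ) hxU).2 (by rwa [frontier_compl])
    filter_upwards [hf.eventually (mem_interior_iff_mem_nhds.1 hint)] with k hk
    exact iff_of_false hk hxU

open Classical in
lemma Filter.Tendsto.eventually_card_filter_mem_eq {X ι α : Type*} [TopologicalSpace X] [Fintype ι]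
    {l : Filter α} {v : α → ι → X} {w : ι → X} {U : Set X} (hv : Tendsto v l (𝓝 w))
    (hw : ∀ i, w i ∉ frontier U) :
    ∀ᶠ k in l, (Finset.univ.filter fun i => v k i ∈ U).card =
      (Finset.univ.filter fun i => w i ∈ U).card := by
  filter_upwards [eventually_all.2 fun i =>
    (tendsto_pi_nhds.1 hv i).eventually_mem_iff_of_notMem_frontier (hw i)] with k hk
  exact congrArg Finset.card (Finset.filter_congr fun i _ => hk i)

namespace Polynomial

variable {K : Type*}

section OfFn

lemma sum_C_mul_X_pow_eq_ofFn [Semiring K] [DecidableEq K] {n : ℕ} (c : Fin n → K) :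
    ∑ i : Fin n, C (c i) * X ^ (i : ℕ) = ofFn n c := by
  simp only [ofFn_eq_sum_monomial, C_mul_X_pow_eq_monomial]

variable [Semiring K] [DecidableEq K] {n : ℕ} {c : Fin (n + 1) → K}

lemma natDegree_ofFn_succ (h : c (Fin.last n) ≠ 0) : (ofFn (n + 1) c).natDegree = n :=
  le_antisymm (Nat.lt_succ_iff.mp (ofFn_natDegree_lt n.succ_pos c))
    (le_natDegree_of_ne_zero (by rwa [ofFn_coeff_eq_val_of_lt _ n.lt_succ_self]))

lemma leadingCoeff_ofFn_succ (h : c (Fin.last n) ≠ 0) :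
    (ofFn (n + 1) c).leadingCoeff = c (Fin.last n) := by
  rw [leadingCoeff, natDegree_ofFn_succ h, ofFn_coeff_eq_val_of_lt _ n.lt_succ_self]
  rfl

end OfFn

lemma isRoot_C_mul_prod_X_sub_C [CommRing K] {ι : Type*} [Fintype ι] (a : K) (v : ι → K)
    (i : ι) : (C a * ∏ j, (X - C (v j))).IsRoot (v i) := by
  simp [eval_prod, Finset.prod_eq_zero (Finset.mem_univ i)]

lemma roots_C_mul_prod_X_sub_C [CommRing K] [IsDomain K] {ι : Type*} [Fintype ι] {a : K}
    (ha : a ≠ 0) (v : ι → K) : (C a * ∏ i, (X - C (v i))).roots = Finset.univ.val.map v := by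
  rw [roots_C_mul _ ha]
  simpa [Multiset.map_map, Function.comp_def] using
    roots_multiset_prod_X_sub_C (Finset.univ.val.map v)

lemma exists_eq_C_leadingCoeff_mul_prod_X_sub_C [Field K] [IsAlgClosed K] {p : K[X]} {n : ℕ}
    (hp : p.natDegree = n) : ∃ v : Fin n → K, p = C p.leadingCoeff * ∏ i, (X - C (v i)) := by
  obtain ⟨l, hl⟩ := Quot.exists_rep p.roots
  obtain rfl : l.length = n := by
    rw [← hp, ← IsAlgClosed.card_roots_eq_natDegree, ← hl]; rfl
  refine ⟨l.get, ?_⟩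
  conv_lhs =>
    rw [← C_leadingCoeff_mul_prod_multiset_X_sub_C (IsAlgClosed.card_roots_eq_natDegree (p := p))]
  have hroots : p.roots = Finset.univ.val.map l.get := by
    rw [Fin.univ_val_map, List.ofFn_get, ← hl]
    rfl
  rw [hroots, Multiset.map_map]
  rfl

open Classical in
noncomputable def rootCountIn [CommRing K] [IsDomain K] (U : Set K) (p : K[X]) : ℕ :=
  Multiset.card (p.roots.filter (· ∈ U))

open Classical in
lemma rootCountIn_C_mul_prod_X_sub_C [CommRing K] [IsDomain K] {ι : Type*} [Fintype ι]
    {a : K} (ha : a ≠ 0) (U : Set K) (v : ι → K) :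
    rootCountIn U (C a * ∏ i, (X - C (v i))) = (Finset.univ.filter fun i => v i ∈ U).card := by
  rw [rootCountIn, roots_C_mul_prod_X_sub_C ha, Multiset.filter_map, Multiset.card_map]
  rfl

lemma rootCountIn_ball_zero [NormedField K] (r : ℝ) (p : K[X]) :
    rootCountIn (ball 0 r) p = Multiset.card (p.roots.filter fun z => ‖z‖ < r) := by
  classical
  exact congrArg _ (Multiset.filter_congr fun z _ => mem_ball_zero_iff)

lemma continuous_eval_ofFn (n : ℕ) (z : ℂ) : Continuous fun c : Fin n → ℂ => (ofFn n c).eval z :=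
  ((leval z).comp (ofFn n)).continuous_of_finiteDimensional

lemma isClosed_setOf_ofFn_eq_C_mul_prod_X_sub_C (n : ℕ) :
    IsClosed {q : (Fin (n + 1) → ℂ) × (Fin n → ℂ) |
      ofFn (n + 1) q.1 = C (q.1 (Fin.last n)) * ∏ i, (X - C (q.2 i))} := by
  have hevals : {q : (Fin (n + 1) → ℂ) × (Fin n → ℂ) |
      ofFn (n + 1) q.1 = C (q.1 (Fin.last n)) * ∏ i, (X - C (q.2 i))} =
      ⋂ z : ℂ, {q | (ofFn (n + 1) q.1).eval z = q.1 (Fin.last n) * ∏ i, (z - q.2 i)} := by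
    ext q
    simp only [Set.mem_ofPred_eq, Set.mem_iInter]
    constructor
    · intro h z
      simp [h, eval_prod]
    · intro h
      exact Polynomial.funext fun z => by simp [h z, eval_prod]
  rw [hevals]
  exact isClosed_iInter fun z =>
    isClosed_eq ((continuous_eval_ofFn _ z).comp continuous_fst) (by fun_prop)

variable {n : ℕ}

lemma norm_lt_of_isRoot_ofFn {c : Fin (n + 1) → ℂ} (h : c (Fin.last n) ≠ 0) {z : ℂ}
    (hz : (ofFn (n + 1) c).IsRoot z) : ‖z‖ < (∑ i, ‖c i‖) / ‖c (Fin.last n)‖ + 1 := by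
  have hne : ofFn (n + 1) c ≠ 0 := leadingCoeff_ne_zero.1 (by rwa [leadingCoeff_ofFn_succ h])
  have hsup : (Finset.range (ofFn (n + 1) c).natDegree).sup (fun j => ‖(ofFn (n + 1) c).coeff j‖₊)
      ≤ ∑ i, ‖c i‖₊ := by
    refine Finset.sup_le fun j hj => ?_
    rw [Finset.mem_range, natDegree_ofFn_succ h] at hj
    rw [ofFn_coeff_eq_val_of_lt c (by omega)]
    exact Finset.single_le_sum (f := fun i => ‖c i‖₊) (fun _ _ => by positivity) (Finset.mem_univ _)
  have hbound : cauchyBound (ofFn (n + 1) c) ≤ (∑ i, ‖c i‖₊) / ‖c (Fin.last n)‖₊ + 1 := by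
    rw [cauchyBound, leadingCoeff_ofFn_succ h]
    gcongr
  have hlt := (hz.norm_lt_cauchyBound hne).trans_le hbound
  rw [← NNReal.coe_lt_coe] at hlt
  push_cast at hlt
  exact hlt

lemma exists_eventually_roots_ofFn_le {c₀ : Fin (n + 1) → ℂ} (h : c₀ (Fin.last n) ≠ 0) :
    ∃ R, ∀ᶠ c in 𝓝 c₀, c (Fin.last n) ≠ 0 ∧ ∀ z, (ofFn (n + 1) c).IsRoot z → ‖z‖ ≤ R := by
  set B : (Fin (n + 1) → ℂ) → ℝ := fun c => (∑ i, ‖c i‖) / ‖c (Fin.last n)‖ + 1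
  have hB : ContinuousAt B c₀ :=
    (((by fun_prop : Continuous fun c : Fin (n + 1) → ℂ => ∑ i, ‖c i‖).continuousAt.div
      (by fun_prop : Continuous fun c : Fin (n + 1) → ℂ => ‖c (Fin.last n)‖).continuousAt
      (norm_ne_zero_iff.2 h)).add continuousAt_const)
  refine ⟨B c₀ + 1, ?_⟩
  filter_upwards [(continuous_apply (Fin.last n)).continuousAt.eventually_ne h,
    hB.eventually (gt_mem_nhds (lt_add_one (B c₀)))] with c hc hBc
  exact ⟨hc, fun z hz => ((norm_lt_of_isRoot_ofFn hc hz).trans hBc).le⟩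

theorem eventually_rootCountIn_ofFn_eq {U : Set ℂ} {c₀ : Fin (n + 1) → ℂ}
    (hlead : c₀ (Fin.last n) ≠ 0) (hU : ∀ z ∈ frontier U, ¬ (ofFn (n + 1) c₀).IsRoot z) :
    ∀ᶠ c in 𝓝 c₀, rootCountIn U (ofFn (n + 1) c) = rootCountIn U (ofFn (n + 1) c₀) := by
  obtain ⟨R, hR⟩ := exists_eventually_roots_ofFn_le hlead
  by_contra hne
  obtain ⟨c, hc, hcR⟩ := exists_seq_forall_of_frequently ((not_eventually.1 hne).and_eventually hR)
  simp only [forall_and] at hcR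
  obtain ⟨hcount, hclead, hcroots⟩ := hcR
  have hfactor : ∀ k, ∃ v : Fin n → ℂ,
      ofFn (n + 1) (c k) = C (c k (Fin.last n)) * ∏ i, (X - C (v i)) := fun k => by
    rw [← leadingCoeff_ofFn_succ (hclead k)]
    exact exists_eq_C_leadingCoeff_mul_prod_X_sub_C (natDegree_ofFn_succ (hclead k))
  choose v hv using hfactor
  have hvR : ∀ k, v k ∈ Set.univ.pi fun _ => closedBall 0 R := fun k =>
    Set.mem_univ_pi.2 fun i =>
      mem_closedBall_zero_iff.2 (hcroots k _ (hv k ▸ isRoot_C_mul_prod_X_sub_C _ _ i))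
  obtain ⟨w, -, φ, hφ, hvw⟩ := tendsto_subseq_of_bounded
    (isCompact_univ_pi fun _ => isCompact_closedBall (0 : ℂ) R).isBounded hvR
  have hw : ofFn (n + 1) c₀ = C (c₀ (Fin.last n)) * ∏ i, (X - C (w i)) :=
    (isClosed_setOf_ofFn_eq_C_mul_prod_X_sub_C n).mem_of_tendsto
      ((hc.comp hφ.tendsto_atTop).prodMk_nhds hvw) (Eventually.of_forall fun k => hv (φ k))
  have hwU : ∀ i, w i ∉ frontier U := fun i hi =>
    hU _ hi (hw ▸ isRoot_C_mul_prod_X_sub_C _ _ i)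
  obtain ⟨k, hk⟩ := (hvw.eventually_card_filter_mem_eq hwU).exists
  apply hcount (φ k)
  rw [hv (φ k), hw, rootCountIn_C_mul_prod_X_sub_C (hclead (φ k)),
    rootCountIn_C_mul_prod_X_sub_C hlead]
  exact hk

end Polynomial

theorem zeros_in_disk_homotopy_invariant_general (n : ℕ)
    (c : ℝ → Fin (n + 1) → ℂ) (hc : Continuous c)
    (hlead : ∀ s ∈ Set.Icc (0 : ℝ) 1, c s (Fin.last n) ≠ 0)
    (hcirc : ∀ s ∈ Set.Icc (0 : ℝ) 1, ∀ z : ℂ, ‖z‖ = 1 →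
      Polynomial.eval z (∑ i : Fin (n + 1),
        Polynomial.C (c s i) * Polynomial.X ^ (i : ℕ)) ≠ 0) :
    Multiset.card ((∑ i : Fin (n + 1),
        Polynomial.C (c 0 i) * Polynomial.X ^ (i : ℕ)).roots.filter
          (fun z => ‖z‖ < 1))
      = Multiset.card ((∑ i : Fin (n + 1),
        Polynomial.C (c 1 i) * Polynomial.X ^ (i : ℕ)).roots.filter
          (fun z => ‖z‖ < 1)) := by
  simp only [sum_C_mul_X_pow_eq_ofFn, ← rootCountIn_ball_zero] at hcirc ⊢
  refine (isPreconnected_Icc (a := (0 : ℝ)) (b := 1)).constant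
    (f := fun s => rootCountIn (ball 0 1) (ofFn (n + 1) (c s)))
    (fun s hs => tendsto_nhds_of_eventually_eq ?_)
    (Set.left_mem_Icc.2 zero_le_one) (Set.right_mem_Icc.2 zero_le_one)
  refine (hc.continuousAt.eventually (eventually_rootCountIn_ofFn_eq (hlead s hs) ?_)).filter_mono
    nhdsWithin_le_nhds
  intro z hz
  rw [frontier_ball 0 one_ne_zero, mem_sphere_zero_iff_norm] at hz
  exact hcirc s hs z hz

/-- Homotopy invariance of the number of zeros in the open unit disk: for a continuous
family of degree-`n` complex polynomials whose leading coefficient never vanishes and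
which have no zero on the unit circle throughout `s ∈ [0,1]`, the number of zeros in the
open unit disk (with multiplicity) at `s = 0` equals that at `s = 1`. -/
theorem zeros_in_disk_homotopy_invariant (n : ℕ) (hn : 0 < n)
    (c : ℝ → Fin (n + 1) → ℂ) (hc : Continuous c)
    (hlead : ∀ s ∈ Set.Icc (0 : ℝ) 1, c s (Fin.last n) ≠ 0)
    (hcirc : ∀ s ∈ Set.Icc (0 : ℝ) 1, ∀ z : ℂ, ‖z‖ = 1 →
      Polynomial.eval z (∑ i : Fin (n + 1),
        Polynomial.C (c s i) * Polynomial.X ^ (i : ℕ)) ≠ 0) :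
    Multiset.card ((∑ i : Fin (n + 1),
        Polynomial.C (c 0 i) * Polynomial.X ^ (i : ℕ)).roots.filter
          (fun z => ‖z‖ < 1))
      = Multiset.card ((∑ i : Fin (n + 1),
        Polynomial.C (c 1 i) * Polynomial.X ^ (i : ℕ)).roots.filter
          (fun z => ‖z‖ < 1)) :=
  zeros_in_disk_homotopy_invariant_general n c hc hlead hcirc
end

section
/- (Exceptional point of the measured channel) Let σ_x = [[0,1],[1,0]], U = exp(−i(π/4)σ_x), and let M be the ℂ-linear map on 2×2 complex matrices defined by M(ρ) = U · D(ρ) · U†, where D(ρ) is the diagonal part of ρ and U† the conjugate transpose. Then the eigenspace of M for eigenvalue 0 (the kernel of M) has dimension 2, while the generalized eigenspace of M for eigenvalue 0 has dimension 3; in particular M is not diagonalizable. -/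
/-! The matrix `U = exp (-i (π/4) σₓ) = cos (π/4) - i sin (π/4) σₓ` has all entries of squared
modulus `1/2`, so `U D Uᴴ` has constant diagonal `tr D / 2` for every diagonal `D`. Hence
`M (M ρ) = (tr ρ / 2) • 1`, while `M` preserves the trace: every `ker Mᵏ` with `k ≥ 2` is the
3-dimensional `ker tr`, whereas `ker M = ker D` is 2-dimensional. For an endomorphism with an
eigenbasis the generalized eigenspaces are the eigenspaces, so `M` has no eigenbasis. -/

open Matrix Polynomial NormedSpace

/-- The measured channel `ρ ↦ U · D(ρ) · U†`, where `D(ρ)` is the diagonal part of `ρ`,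
as a `ℂ`-linear endomorphism of `2 × 2` complex matrices. -/
noncomputable def measuredChannel (U : Matrix (Fin 2) (Fin 2) ℂ) :
    Matrix (Fin 2) (Fin 2) ℂ →ₗ[ℂ] Matrix (Fin 2) (Fin 2) ℂ where
  toFun ρ := U * Matrix.diagonal (fun i => ρ i i) * Uᴴ
  map_add' x y := by
    show U * Matrix.diagonal (fun i => (x + y) i i) * Uᴴ
        = U * Matrix.diagonal (fun i => x i i) * Uᴴ
          + U * Matrix.diagonal (fun i => y i i) * Uᴴ
    have h : Matrix.diagonal (fun i => (x + y) i i)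
        = Matrix.diagonal (fun i => x i i) + Matrix.diagonal (fun i => y i i) := by
      rw [Matrix.diagonal_add]
      rfl
    rw [h, Matrix.mul_add, Matrix.add_mul]
  map_smul' c x := by
    show U * Matrix.diagonal (fun i => (c • x) i i) * Uᴴ
        = c • (U * Matrix.diagonal (fun i => x i i) * Uᴴ)
    have h : Matrix.diagonal (fun i => (c • x) i i)
        = c • Matrix.diagonal (fun i => x i i) := by
      rw [← Matrix.diagonal_smul]
      rfl
    rw [h, Matrix.mul_smul, Matrix.smul_mul]

namespace NormedSpace

theorem exp_smul_of_mul_self_eq_one {A : Type*} [Ring A] [Algebra ℂ A] [TopologicalSpace A]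
    [IsTopologicalRing A] [T2Space A] [ContinuousSMul ℂ A] {x : A} (hx : x * x = 1) (c : ℂ) :
    exp (c • x) = Complex.cosh c • 1 + Complex.sinh c • x := by
  have hx2 : x ^ 2 = 1 := by rw [sq, hx]
  rw [exp_eq_tsum ℂ]
  refine HasSum.tsum_eq (HasSum.even_add_odd ?_ ?_)
  · convert (Complex.hasSum_cosh c).smul_const (1 : A) using 2 with n
    rw [_root_.smul_pow, pow_mul x, hx2, one_pow, smul_smul, div_eq_inv_mul]
  · convert (Complex.hasSum_sinh c).smul_const x using 2 with n
    rw [_root_.smul_pow, pow_succ x, pow_mul x, hx2, one_pow, one_mul, smul_smul, div_eq_inv_mul]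

end NormedSpace

namespace Module.End

theorem maxGenEigenspace_eq_eigenspace_of_basis {R M n : Type*} [CommRing R] [IsDomain R]
    [AddCommGroup M] [Module R M] [Fintype n] [DecidableEq n] (b : Module.Basis n R M)
    {f : End R M} {ev : n → R} (hf : ∀ i, f (b i) = ev i • b i) (μ : R) :
    f.maxGenEigenspace μ = f.eigenspace μ := by
  obtain rfl : f = (Matrix.diagonal ev).toLin b b :=
    b.ext fun i => by simp [Matrix.toLin_self, Matrix.diagonal_apply, hf]
  exact Matrix.maxGenEigenspace_toLin_diagonal_eq_eigenspace ev b

end Module.End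

namespace Matrix

variable {n K : Type*} [Fintype n] [Field K]

theorem finrank_ker_diagLinearMap [DecidableEq n] :
    Module.finrank K (LinearMap.ker (diagLinearMap n K K)) =
      Fintype.card n * Fintype.card n - Fintype.card n := by
  have hsurj : Function.Surjective (diagLinearMap n K K) :=
    fun d => ⟨diagonal d, diag_diagonal d⟩
  have := LinearMap.finrank_range_add_finrank_ker (diagLinearMap n K K)
  rw [LinearMap.range_eq_top.2 hsurj, finrank_top, Module.finrank_matrix,
    Module.finrank_self, mul_one, Module.finrank_fintype_fun_eq_card] at this
  omega

theorem finrank_ker_traceLinearMap [Nonempty n] :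
    Module.finrank K (LinearMap.ker (traceLinearMap n K K)) =
      Fintype.card n * Fintype.card n - 1 := by
  have := LinearMap.finrank_range_add_finrank_ker (traceLinearMap n K K)
  rw [LinearMap.range_eq_top.2 trace_surjective, finrank_top, Module.finrank_matrix,
    Module.finrank_self, mul_one] at this
  omega

end Matrix

section MeasuredChannel

variable {U : Matrix (Fin 2) (Fin 2) ℂ}

theorem measuredChannel_apply (U ρ : Matrix (Fin 2) (Fin 2) ℂ) :
    measuredChannel U ρ = U * diagonal (diag ρ) * Uᴴ := rfl

theorem ker_measuredChannel (hU : U ∈ unitaryGroup (Fin 2) ℂ) :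
    LinearMap.ker (measuredChannel U) = LinearMap.ker (diagLinearMap (Fin 2) ℂ ℂ) := by
  have hUU : Uᴴ * U = 1 := mem_unitaryGroup_iff'.1 hU
  ext ρ
  change measuredChannel U ρ = 0 ↔ diag ρ = 0
  rw [← diagonal_eq_zero]
  constructor
  · intro h
    calc diagonal (diag ρ) = Uᴴ * measuredChannel U ρ * U := by
          rw [measuredChannel_apply, Matrix.mul_assoc, Matrix.mul_assoc, hUU, Matrix.mul_one,
            ← Matrix.mul_assoc, hUU, Matrix.one_mul]
      _ = 0 := by rw [h, Matrix.mul_zero, Matrix.zero_mul]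
  · intro h
    rw [measuredChannel_apply, h, Matrix.mul_zero, Matrix.zero_mul]

theorem trace_measuredChannel (hU : U ∈ unitaryGroup (Fin 2) ℂ)
    (ρ : Matrix (Fin 2) (Fin 2) ℂ) :
    (measuredChannel U ρ).trace = ρ.trace := by
  have hUU : Uᴴ * U = 1 := mem_unitaryGroup_iff'.1 hU
  rw [measuredChannel_apply, trace_mul_cycle, hUU, Matrix.one_mul, trace_diagonal]
  rfl

theorem diag_measuredChannel (hunb : ∀ i j, Complex.normSq (U i j) = 2⁻¹)
    (ρ : Matrix (Fin 2) (Fin 2) ℂ) :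
    diag (measuredChannel U ρ) = fun _ => ρ.trace / 2 := by
  funext i
  have hmul (j : Fin 2) : U i j * starRingEnd ℂ (U i j) = 2⁻¹ := by
    rw [Complex.mul_conj, hunb]
    norm_num
  rw [measuredChannel_apply, diag_apply, mul_apply, Fin.sum_univ_two, trace_fin_two]
  simp only [mul_diagonal, conjTranspose_apply, RCLike.star_def, diag_apply]
  linear_combination ρ 0 0 * hmul 0 + ρ 1 1 * hmul 1

theorem measuredChannel_measuredChannel (hU : U ∈ unitaryGroup (Fin 2) ℂ)
    (hunb : ∀ i j, Complex.normSq (U i j) = 2⁻¹) (ρ : Matrix (Fin 2) (Fin 2) ℂ) :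
    measuredChannel U (measuredChannel U ρ) = (ρ.trace / 2) • 1 := by
  have hUU : U * Uᴴ = 1 := mem_unitaryGroup_iff.1 hU
  rw [measuredChannel_apply, diag_measuredChannel hunb, ← smul_one_eq_diagonal,
    Matrix.mul_smul, Matrix.mul_one, Matrix.smul_mul, hUU]

theorem maxGenEigenspace_measuredChannel_zero (hU : U ∈ unitaryGroup (Fin 2) ℂ)
    (hunb : ∀ i j, Complex.normSq (U i j) = 2⁻¹) :
    Module.End.maxGenEigenspace (measuredChannel U) 0 =
      LinearMap.ker (traceLinearMap (Fin 2) ℂ ℂ) := by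
  have trace_pow (k : ℕ) (ρ : Matrix (Fin 2) (Fin 2) ℂ) :
      ((measuredChannel U ^ k) ρ).trace = ρ.trace := by
    induction k with
    | zero => rfl
    | succ k ih => rw [pow_succ', Module.End.mul_apply, trace_measuredChannel hU, ih]
  ext ρ
  simp only [Module.End.mem_maxGenEigenspace, zero_smul, sub_zero, LinearMap.mem_ker,
    traceLinearMap_apply]
  constructor
  · rintro ⟨k, hk⟩
    rw [← trace_pow k, hk, trace_zero]
  · intro hρ
    refine ⟨2, ?_⟩
    rw [sq, Module.End.mul_apply, measuredChannel_measuredChannel hU hunb, hρ, zero_div,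
      zero_smul]

end MeasuredChannel

open Complex in
noncomputable def pauliXRotation (θ : ℝ) : Matrix (Fin 2) (Fin 2) ℂ :=
  !![(Real.cos θ : ℂ), -I * Real.sin θ; -I * Real.sin θ, Real.cos θ]

open Complex in
theorem exp_smul_pauliX (θ : ℝ) :
    exp ((-I * θ) • (!![0, 1; 1, 0] : Matrix (Fin 2) (Fin 2) ℂ)) = pauliXRotation θ := by
  have hX : (!![0, 1; 1, 0] : Matrix (Fin 2) (Fin 2) ℂ) * !![0, 1; 1, 0] = 1 := by
    simp [one_fin_two]
  rw [exp_smul_of_mul_self_eq_one hX, show -I * θ = ((-θ : ℝ) : ℂ) * I by push_cast; ring,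
    cosh_mul_I, sinh_mul_I, ← ofReal_cos, ← ofReal_sin, Real.cos_neg, Real.sin_neg]
  ext i j
  fin_cases i <;> fin_cases j <;> simp [pauliXRotation, mul_comm]

theorem pauliXRotation_mem_unitaryGroup (θ : ℝ) :
    pauliXRotation θ ∈ unitaryGroup (Fin 2) ℂ := by
  have h : (Real.cos θ : ℂ) ^ 2 + (Real.sin θ : ℂ) ^ 2 = 1 := by
    exact_mod_cast Real.cos_sq_add_sin_sq θ
  rw [mem_unitaryGroup_iff]
  ext i j
  fin_cases i <;> fin_cases j <;>
    simp [pauliXRotation, mul_apply, Fin.sum_univ_two, -Complex.ofReal_cos, -Complex.ofReal_sin] <;>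
    [linear_combination h - (Real.sin θ : ℂ) ^ 2 * Complex.I_sq; ring; ring;
      linear_combination h - (Real.sin θ : ℂ) ^ 2 * Complex.I_sq]

theorem normSq_pauliXRotation_pi_div_four (i j : Fin 2) :
    Complex.normSq (pauliXRotation (Real.pi / 4) i j) = 2⁻¹ := by
  fin_cases i <;> fin_cases j <;> simp [pauliXRotation, Real.cos_pi_div_four, Real.sin_pi_div_four]

/-- Exceptional point of the measured channel: for `U = exp (-i (π/4) σₓ)`, the kernel of
`M : ρ ↦ U · D(ρ) · U†` is 2-dimensional while the generalized eigenspace for eigenvalue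
`0` is 3-dimensional; in particular `M` admits no eigenbasis, i.e. is not
diagonalizable. -/
theorem measuredChannel_exceptional_point :
    Module.finrank ℂ
      (LinearMap.ker (measuredChannel (NormedSpace.exp
        ((-(Complex.I) * ((Real.pi : ℂ) / 4)) •
          (!![0, 1; 1, 0] : Matrix (Fin 2) (Fin 2) ℂ))))) = 2 ∧
    Module.finrank ℂ
      (Module.End.maxGenEigenspace (measuredChannel (NormedSpace.exp
        ((-(Complex.I) * ((Real.pi : ℂ) / 4)) •
          (!![0, 1; 1, 0] : Matrix (Fin 2) (Fin 2) ℂ)))) 0) = 3 ∧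
    ¬ ∃ b : Module.Basis (Fin 4) ℂ (Matrix (Fin 2) (Fin 2) ℂ),
        ∀ i, ∃ μ : ℂ, measuredChannel (NormedSpace.exp
          ((-(Complex.I) * ((Real.pi : ℂ) / 4)) •
            (!![0, 1; 1, 0] : Matrix (Fin 2) (Fin 2) ℂ))) (b i) = μ • b i := by
  rw [show -Complex.I * ((Real.pi : ℂ) / 4) = -Complex.I * ((Real.pi / 4 : ℝ) : ℂ) by
    push_cast; rfl, exp_smul_pauliX]
  set M := measuredChannel (pauliXRotation (Real.pi / 4))
  have hU := pauliXRotation_mem_unitaryGroup (Real.pi / 4)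
  have hker : Module.finrank ℂ (LinearMap.ker M) = 2 := by
    rw [ker_measuredChannel hU, finrank_ker_diagLinearMap, Fintype.card_fin]
  have hgen : Module.finrank ℂ (Module.End.maxGenEigenspace M 0) = 3 := by
    rw [maxGenEigenspace_measuredChannel_zero hU normSq_pauliXRotation_pi_div_four,
      finrank_ker_traceLinearMap, Fintype.card_fin]
  refine ⟨hker, hgen, ?_⟩
  rintro ⟨b, hb⟩
  choose ev hev using hb
  rw [Module.End.maxGenEigenspace_eq_eigenspace_of_basis b hev, Module.End.eigenspace_zero,
    hker] at hgen
  omega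
end
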